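/- arXiv:2510.14542 — 4 statements merged into one kernel-verified Lean document; each statement's English description precedes it below -/
import Mathlib

section
/- The layer normalization map LN(z) = γ₁ ⊙ (z − μ(z)·1)/σ(z) + γ₂, where μ(z) = (1/m)·1ᵀz and σ(z) = √((1/m)‖z − μ(z)·1‖² + ε), is Lipschitz on R^m with Lipschitz constant at most ‖γ₁‖_∞ / √ε. -/
/-!
`LN` factors as `z ↦ γ₁ ⊙ N (P z) + γ₂`, where `P` is the orthogonal projection onto `1ᗮ`
(a contraction), `N u = u / √(‖u‖² / m + ε)`, and multiplication by `γ₁` has norm at most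
`‖γ₁‖_∞`.
Up to the factor `√m`, `N u` is the first component of the radial projection `p ↦ p / ‖p‖`
of `p = (u, √(m ε))`. The radial projection is `1 / r`-Lipschitz outside the ball of radius `r`,
because `‖p‖ ‖q‖ ‖p / ‖p‖ - q / ‖q‖‖² = 2 ‖p‖ ‖q‖ - 2 ⟪p, q⟫ ≤ ‖p - q‖²`; as `‖p‖ ≥ √(m ε)`,
this makes `N` a `1 / √ε`-Lipschitz map.
-/

/-- Layer normalization `LN(z) = γ₁ ⊙ (z − μ(z)·1)/σ(z) + γ₂` with
`μ(z) = (1/m)·1ᵀz` and `σ(z) = √((1/m)‖z − μ(z)·1‖² + ε)`. -/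
noncomputable def LN {m : ℕ} (ε : ℝ) (γ₁ γ₂ : Fin m → ℝ)
    (z : EuclideanSpace ℝ (Fin m)) : EuclideanSpace ℝ (Fin m) :=
  (WithLp.equiv 2 _).symm fun i =>
    γ₁ i * ((z i - (∑ j, z j) / m) /
        Real.sqrt ((∑ j, (z j - (∑ l, z l) / m) ^ 2) / m + ε)) + γ₂ i

open Real RealInnerProductSpace

section
variable {F : Type*} [NormedAddCommGroup F] [InnerProductSpace ℝ F]

theorem norm_mul_norm_mul_norm_inv_smul_sub_inv_smul_sq_le (p q : F) :
    ‖p‖ * ‖q‖ * ‖‖p‖⁻¹ • p - ‖q‖⁻¹ • q‖ ^ 2 ≤ ‖p - q‖ ^ 2 := by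
  rcases eq_or_ne p 0 with rfl | hp
  · simp
  rcases eq_or_ne q 0 with rfl | hq
  · simp
  have hp' : ‖p‖ ≠ 0 := norm_ne_zero_iff.2 hp
  have hq' : ‖q‖ ≠ 0 := norm_ne_zero_iff.2 hq
  rw [norm_sub_sq_real, norm_sub_sq_real, norm_smul, norm_smul, inner_smul_left,
    inner_smul_right]
  simp only [norm_inv, norm_norm, conj_trivial]
  field_simp
  nlinarith [sq_nonneg (‖p‖ - ‖q‖)]

theorem norm_inv_smul_sub_inv_smul_le {r : ℝ} (hr : 0 < r) {p q : F} (hp : r ≤ ‖p‖)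
    (hq : r ≤ ‖q‖) : ‖‖p‖⁻¹ • p - ‖q‖⁻¹ • q‖ ≤ r⁻¹ * ‖p - q‖ := by
  rw [le_inv_mul_iff₀ hr]
  refine le_of_pow_le_pow_left₀ two_ne_zero (norm_nonneg _) ?_
  calc (r * ‖‖p‖⁻¹ • p - ‖q‖⁻¹ • q‖) ^ 2
      = r * r * ‖‖p‖⁻¹ • p - ‖q‖⁻¹ • q‖ ^ 2 := by ring
    _ ≤ ‖p‖ * ‖q‖ * ‖‖p‖⁻¹ • p - ‖q‖⁻¹ • q‖ ^ 2 := by gcongr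
    _ ≤ ‖p - q‖ ^ 2 := norm_mul_norm_mul_norm_inv_smul_sub_inv_smul_sq_le p q

theorem norm_inv_sqrt_smul_sub_inv_sqrt_smul_le {δ : ℝ} (hδ : 0 < δ) (x y : F) :
    ‖(√(‖x‖ ^ 2 + δ))⁻¹ • x - (√(‖y‖ ^ 2 + δ))⁻¹ • y‖ ≤ (√δ)⁻¹ * ‖x - y‖ := by
  let lift (x : F) : WithLp 2 (F × ℝ) := WithLp.toLp 2 (x, √δ)
  have norm_lift (x : F) : ‖lift x‖ = √(‖x‖ ^ 2 + δ) := by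
    simp [lift, WithLp.prod_norm_eq_of_L2, abs_of_nonneg, sq_sqrt hδ.le]
  have sqrt_le_norm_lift (x : F) : √δ ≤ ‖lift x‖ :=
    norm_lift x ▸ sqrt_le_sqrt (le_add_of_nonneg_left (sq_nonneg _))
  calc _ ≤ ‖‖lift x‖⁻¹ • lift x - ‖lift y‖⁻¹ • lift y‖ := by
        simpa [norm_lift, lift] using
          WithLp.norm_fst_le F (‖lift x‖⁻¹ • lift x - ‖lift y‖⁻¹ • lift y)
    _ ≤ (√δ)⁻¹ * ‖lift x - lift y‖ :=
        norm_inv_smul_sub_inv_smul_le (sqrt_pos.2 hδ) (sqrt_le_norm_lift x) (sqrt_le_norm_lift y)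
    _ = (√δ)⁻¹ * ‖x - y‖ := by simp [lift, ← WithLp.toLp_sub]

theorem norm_inv_sqrt_div_smul_sub_inv_sqrt_div_smul_le {M ε : ℝ} (hM : 0 < M) (hε : 0 < ε)
    (x y : F) :
    ‖(√(‖x‖ ^ 2 / M + ε))⁻¹ • x - (√(‖y‖ ^ 2 / M + ε))⁻¹ • y‖ ≤ (√ε)⁻¹ * ‖x - y‖ := by
  have rescale (x : F) :
      (√(‖x‖ ^ 2 / M + ε))⁻¹ • x = √M • (√(‖x‖ ^ 2 + M * ε))⁻¹ • x := by
    have : ‖x‖ ^ 2 / M + ε = (‖x‖ ^ 2 + M * ε) / M := by field_simp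
    rw [smul_smul, this, sqrt_div (by positivity), inv_div, div_eq_mul_inv]
  have hδ : 0 < M * ε := mul_pos hM hε
  rw [rescale, rescale, ← smul_sub, norm_smul, norm_of_nonneg (sqrt_nonneg M)]
  calc √M * ‖(√(‖x‖ ^ 2 + M * ε))⁻¹ • x - (√(‖y‖ ^ 2 + M * ε))⁻¹ • y‖
      ≤ √M * ((√(M * ε))⁻¹ * ‖x - y‖) := by
        gcongr; exact norm_inv_sqrt_smul_sub_inv_sqrt_smul_le hδ x y
    _ = (√ε)⁻¹ * ‖x - y‖ := by
        rw [sqrt_mul hM.le]; field_simp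
end

section
variable {ι : Type*} [Fintype ι]

theorem starProjection_orthogonal_span_const_apply (z : EuclideanSpace ℝ ι) (i : ι) :
    (ℝ ∙ WithLp.toLp 2 (fun _ : ι => (1 : ℝ)))ᗮ.starProjection z i
      = z i - (∑ j, z j) / Fintype.card ι := by
  rw [Submodule.starProjection_orthogonal_val, Submodule.starProjection_singleton,
    EuclideanSpace.norm_eq]
  simp [PiLp.inner_apply]

theorem norm_toLp_mul_le_iSup_abs_mul_norm (γ : ι → ℝ) (v : EuclideanSpace ℝ ι) :
    ‖WithLp.toLp 2 (fun i => γ i * v i)‖ ≤ (⨆ i, |γ i|) * ‖v‖ := by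
  refine le_of_pow_le_pow_left₀ two_ne_zero
    (mul_nonneg (Real.iSup_nonneg fun i => abs_nonneg _) (norm_nonneg _)) ?_
  rw [mul_pow, EuclideanSpace.norm_sq_eq, EuclideanSpace.norm_sq_eq, Finset.mul_sum]
  gcongr with i
  simp only [norm_mul, mul_pow]
  gcongr
  exact le_ciSup (f := fun i => |γ i|) (Set.finite_range _).bddAbove i
end

/-- LN is Lipschitz with constant at most `‖γ₁‖_∞ / √ε`. -/
theorem LN_lipschitz_upper {m : ℕ} (hm : 2 ≤ m) {ε : ℝ} (hε : 0 < ε)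
    (γ₁ γ₂ : Fin m → ℝ) :
    ∀ z w : EuclideanSpace ℝ (Fin m),
      ‖LN ε γ₁ γ₂ z - LN ε γ₁ γ₂ w‖ ≤ ((⨆ i, |γ₁ i|) / Real.sqrt ε) * ‖z - w‖ := by
  intro z w
  set P := (ℝ ∙ WithLp.toLp 2 (fun _ : Fin m => (1 : ℝ)))ᗮ.starProjection
  set N : EuclideanSpace ℝ (Fin m) → EuclideanSpace ℝ (Fin m) :=
    fun u => (√(‖u‖ ^ 2 / m + ε))⁻¹ • u
  have LN_eq (z) : LN ε γ₁ γ₂ z = WithLp.toLp 2 (fun i => γ₁ i * N (P z) i + γ₂ i) := by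
    ext i
    simp only [LN, N, P, WithLp.equiv_symm_apply, PiLp.toLp_apply, PiLp.smul_apply, smul_eq_mul,
      EuclideanSpace.norm_sq_eq, Real.norm_eq_abs, sq_abs,
      starProjection_orthogonal_span_const_apply, Fintype.card_fin]
    ring
  have LN_sub_eq : LN ε γ₁ γ₂ z - LN ε γ₁ γ₂ w
      = WithLp.toLp 2 (fun i => γ₁ i * (N (P z) - N (P w)) i) := by
    rw [LN_eq, LN_eq]
    ext i
    simp only [PiLp.sub_apply, add_sub_add_right_eq_sub, mul_sub]
  have hm0 : (0 : ℝ) < m := Nat.cast_pos.2 (by omega)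
  have hG : 0 ≤ ⨆ i, |γ₁ i| := Real.iSup_nonneg fun i => abs_nonneg _
  calc ‖LN ε γ₁ γ₂ z - LN ε γ₁ γ₂ w‖
      ≤ (⨆ i, |γ₁ i|) * ‖N (P z) - N (P w)‖ := by
        rw [LN_sub_eq]; exact norm_toLp_mul_le_iSup_abs_mul_norm _ _
    _ ≤ (⨆ i, |γ₁ i|) * ((√ε)⁻¹ * ‖P z - P w‖) := by
        gcongr; exact norm_inv_sqrt_div_smul_sub_inv_sqrt_div_smul_le hm0 hε _ _
    _ ≤ (⨆ i, |γ₁ i|) * ((√ε)⁻¹ * ‖z - w‖) := by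
        rw [← map_sub]; gcongr; exact Submodule.norm_starProjection_apply_le _ _
    _ = ((⨆ i, |γ₁ i|) / Real.sqrt ε) * ‖z - w‖ := by ring
end

section
/- The Lipschitz constant of layer normalization LN(z) = γ₁ ⊙ (z − μ(z)·1)/σ(z) + γ₂ is at least (‖γ₁‖_∞ / √ε)·√(1 − 1/m). -/
/-!
At a centred point `z` the mean term of `LN` vanishes and `σ(z) = √(‖z‖²/m + ε)`, which tends to
`√ε` as `z → 0`. So along the centred direction `v = eᵢ − (1/m)·1`, the Lipschitz bound between
`t • v` and `0`, divided by `t`, tends to `|γ₁ i| · vᵢ / √ε ≤ K ‖v‖` as `t → 0⁺`; since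
`vᵢ = ‖v‖² = 1 − 1/m`, this is `|γ₁ i| · √(1 − 1/m) / √ε ≤ K`.
-/

open Filter Topology

variable {m : ℕ}

lemma LN_apply_of_sum_eq_zero (ε : ℝ) (γ₁ γ₂ : Fin m → ℝ) {v : EuclideanSpace ℝ (Fin m)}
    (hv : ∑ j, v j = 0) (i : Fin m) :
    LN ε γ₁ γ₂ v i = γ₁ i * (v i / √(‖v‖ ^ 2 / m + ε)) + γ₂ i := by
  simp [LN, hv, EuclideanSpace.real_norm_sq_eq]

lemma abs_mul_abs_div_sqrt_le_of_LN_lipschitz {ε : ℝ} (hε : 0 < ε) {γ₁ γ₂ : Fin m → ℝ} {K : ℝ}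
    (hK : ∀ z w, ‖LN ε γ₁ γ₂ z - LN ε γ₁ γ₂ w‖ ≤ K * ‖z - w‖)
    {v : EuclideanSpace ℝ (Fin m)} (hv : ∑ j, v j = 0) (i : Fin m) :
    |γ₁ i| * |v i| / √ε ≤ K * ‖v‖ := by
  have hscaled : ∀ t : ℝ, 0 < t → |γ₁ i| * |v i| / √(t ^ 2 * ‖v‖ ^ 2 / m + ε) ≤ K * ‖v‖ := by
    intro t ht
    have htv : ∑ j, (t • v) j = 0 := by simp [← Finset.mul_sum, hv]
    refine le_of_mul_le_mul_left ?_ ht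
    calc t * (|γ₁ i| * |v i| / √(t ^ 2 * ‖v‖ ^ 2 / m + ε))
        = ‖(LN ε γ₁ γ₂ (t • v) - LN ε γ₁ γ₂ 0) i‖ := by
          rw [PiLp.sub_apply, LN_apply_of_sum_eq_zero _ _ _ htv,
            LN_apply_of_sum_eq_zero _ _ _ (by simp)]
          simp only [PiLp.smul_apply, PiLp.zero_apply, smul_eq_mul, norm_smul, norm_zero,
            Real.norm_eq_abs, abs_of_pos ht, mul_pow, ne_eq, OfNat.ofNat_ne_zero,
            not_false_eq_true, zero_pow, zero_div, zero_add, mul_zero, add_sub_cancel_right,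
            norm_mul, norm_div, abs_of_nonneg (Real.sqrt_nonneg _)]
          ring
      _ ≤ ‖LN ε γ₁ γ₂ (t • v) - LN ε γ₁ γ₂ 0‖ := PiLp.norm_apply_le _ i
      _ ≤ K * ‖t • v - 0‖ := hK _ _
      _ = t * (K * ‖v‖) := by rw [sub_zero, norm_smul, Real.norm_of_nonneg ht.le]; ring
  have hcont : ContinuousAt (fun t : ℝ => |γ₁ i| * |v i| / √(t ^ 2 * ‖v‖ ^ 2 / m + ε)) 0 := by
    refine continuousAt_const.div (Real.continuous_sqrt.continuousAt.comp (by fun_prop)) ?_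
    simpa using (Real.sqrt_pos.2 hε).ne'
  refine le_of_tendsto (x := 𝓝[>] (0 : ℝ)) ?_ (eventually_nhdsWithin_of_forall hscaled)
  simpa using hcont.tendsto.mono_left nhdsWithin_le_nhds

noncomputable def centeredSingle (i : Fin m) : EuclideanSpace ℝ (Fin m) :=
  WithLp.toLp 2 fun j => (if j = i then 1 else 0) - 1 / m

lemma centeredSingle_apply_self (i : Fin m) : centeredSingle i i = 1 - 1 / m := by
  simp [centeredSingle]

lemma sum_centeredSingle (i : Fin m) : ∑ j, centeredSingle i j = 0 := by
  have hm : (m : ℝ) ≠ 0 := by have := i.pos; positivity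
  simp [centeredSingle, Finset.sum_sub_distrib, hm]

lemma norm_sq_centeredSingle (i : Fin m) : ‖centeredSingle i‖ ^ 2 = 1 - 1 / m := by
  have hm : (m : ℝ) ≠ 0 := by have := i.pos; positivity
  have hsq (j : Fin m) : ((if j = i then 1 else 0) - 1 / (m : ℝ)) ^ 2 =
      (if j = i then 1 - 2 / (m : ℝ) else 0) + 1 / (m : ℝ) ^ 2 := by
    split_ifs <;> ring
  simp only [EuclideanSpace.real_norm_sq_eq, centeredSingle, hsq, Finset.sum_add_distrib, Finset.sum_ite_eq', Finset.mem_univ, ↓reduceIte,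
    Finset.sum_const, Finset.card_univ, Fintype.card_fin, nsmul_eq_mul]
  field_simp
  ring

lemma abs_mul_sqrt_div_sqrt_le_of_LN_lipschitz (hm : 1 < m) {ε : ℝ} (hε : 0 < ε)
    {γ₁ γ₂ : Fin m → ℝ} {K : ℝ} (hK : ∀ z w, ‖LN ε γ₁ γ₂ z - LN ε γ₁ γ₂ w‖ ≤ K * ‖z - w‖)
    (i : Fin m) : |γ₁ i| * √(1 - 1 / m) / √ε ≤ K := by
  have hS : 0 < 1 - 1 / (m : ℝ) := by
    rw [sub_pos, div_lt_one (by positivity)]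
    exact_mod_cast hm
  have h := abs_mul_abs_div_sqrt_le_of_LN_lipschitz hε hK (sum_centeredSingle i) i
  rw [centeredSingle_apply_self, abs_of_pos hS, ← Real.sqrt_sq (norm_nonneg _),
    norm_sq_centeredSingle] at h
  refine le_of_mul_le_mul_right ?_ (Real.sqrt_pos.2 hS)
  linear_combination h + (|γ₁ i| / √ε) * Real.mul_self_sqrt hS.le

/-- Any Lipschitz constant of LN is at least `(‖γ₁‖_∞ / √ε)·√(1 − 1/m)`. -/
theorem LN_lipschitz_lower {m : ℕ} (hm : 2 ≤ m) {ε : ℝ} (hε : 0 < ε)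
    (γ₁ γ₂ : Fin m → ℝ) (K : ℝ)
    (hK : ∀ z w : EuclideanSpace ℝ (Fin m),
      ‖LN ε γ₁ γ₂ z - LN ε γ₁ γ₂ w‖ ≤ K * ‖z - w‖) :
    ((⨆ i, |γ₁ i|) / Real.sqrt ε) * Real.sqrt (1 - 1 / m) ≤ K := by
  have : Nonempty (Fin m) := ⟨⟨0, by omega⟩⟩
  rw [div_mul_eq_mul_div, div_le_iff₀ (Real.sqrt_pos.2 hε),
    Real.iSup_mul_of_nonneg (Real.sqrt_nonneg _)]
  exact ciSup_le fun i =>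
    (div_le_iff₀ (Real.sqrt_pos.2 hε)).1 (abs_mul_sqrt_div_sqrt_le_of_LN_lipschitz hm hε hK i)
end

section
/- Finite-horizon H² trace formula for the quadratic kernel: for h₂[t₁,t₂] = M(A^{t₁}B ⊗ A^{t₂}B) with M = [vec(M₁),…,vec(M_p)]ᵀ and each M_k Hermitian, the squared finite-horizon ℓ² norm satisfies Σ_{t₁=0}^{L−1} Σ_{t₂=0}^{L−1} ‖h₂[t₁,t₂]‖² = Σ_{k=1}^{p} tr(P_L M_k P_L M_k), where P_L = Σ_{t=0}^{L−1} Aᵗ B B* (A*)ᵗ. -/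
/-! The squared Frobenius norm of `C` is `re tr (C Cᴴ)`. For `C = Xᴴ M Y` with `M` Hermitian,
`Cᴴ = Yᴴ M X`, and cyclicity of the trace gives `tr (X Xᴴ M Y Yᴴ M)`. Summing over both time
indices, bilinearity assembles the Gramians `X Xᴴ = Aᵗ B Bᴴ (Aᴴ)ᵗ` into `P_L` on each side. -/

open Matrix

namespace Matrix

variable {ι m n 𝕜 : Type*} [Fintype m] [Fintype n]

theorem sum_norm_sq_eq_re_trace_mul_conjTranspose [RCLike 𝕜] (C : Matrix m n 𝕜) :
    ∑ i, ∑ j, ‖C i j‖ ^ 2 = RCLike.re (trace (C * Cᴴ)) := by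
  simp only [trace, diag, mul_apply, conjTranspose_apply, RCLike.star_def, RCLike.mul_conj,
    map_sum]
  norm_cast

theorem trace_sandwich_mul_conjTranspose {R : Type*} [CommSemiring R] [StarRing R]
    (X Y : Matrix n m R) {H : Matrix n n R} (hH : H.IsHermitian) :
    trace ((Xᴴ * H * Y) * (Xᴴ * H * Y)ᴴ) = trace (X * Xᴴ * H * (Y * Yᴴ) * H) := by
  have hadj : (Xᴴ * H * Y)ᴴ = Yᴴ * H * X := by
    simp only [conjTranspose_mul, hH.eq, conjTranspose_conjTranspose, Matrix.mul_assoc]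
  calc trace ((Xᴴ * H * Y) * (Xᴴ * H * Y)ᴴ)
      = trace (Xᴴ * (H * Y * Yᴴ * H * X)) := by rw [hadj]; simp only [Matrix.mul_assoc]
    _ = trace ((H * (Y * Yᴴ) * H) * (X * Xᴴ)) := by
        rw [trace_mul_comm]; simp only [Matrix.mul_assoc]
    _ = trace (X * Xᴴ * H * (Y * Yᴴ) * H) := by
        rw [trace_mul_comm]; simp only [Matrix.mul_assoc]

theorem sum_sum_norm_sq_sandwich_eq_re_trace [RCLike 𝕜] (s : Finset ι) (X : ι → Matrix n m 𝕜)
    {H : Matrix n n 𝕜} (hH : H.IsHermitian) :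
    ∑ t₁ ∈ s, ∑ t₂ ∈ s, ∑ i, ∑ j, ‖((X t₁)ᴴ * H * X t₂) i j‖ ^ 2
      = RCLike.re (trace ((∑ t ∈ s, X t * (X t)ᴴ) * H * (∑ t ∈ s, X t * (X t)ᴴ) * H)) := by
  simp only [sum_norm_sq_eq_re_trace_mul_conjTranspose, trace_sandwich_mul_conjTranspose _ _ hH,
    Matrix.sum_mul, Matrix.mul_sum, trace_sum, map_sum]
  exact Finset.sum_comm

end Matrix

/-- Finite-horizon H² trace formula for the quadratic kernel of an LQO system:
with `h₂[t₁,t₂]` the `p × m²` matrix whose `(k,(j₁,j₂))` entry is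
`((A^{t₁}B)ᴴ M_k (A^{t₂}B))_{j₁ j₂}` and each `M_k` Hermitian,
`Σ_{t₁,t₂<L} ‖h₂[t₁,t₂]‖_F² = Σ_k tr(P_L M_k P_L M_k)` with
`P_L = Σ_{t<L} Aᵗ B B* (A*)ᵗ`. -/
theorem quadratic_kernel_h2_trace {n m p L : ℕ}
    (A : Matrix (Fin n) (Fin n) ℂ) (B : Matrix (Fin n) (Fin m) ℂ)
    (M : Fin p → Matrix (Fin n) (Fin n) ℂ) (hM : ∀ k, (M k).IsHermitian) :
    (∑ t₁ ∈ Finset.range L, ∑ t₂ ∈ Finset.range L, ∑ k : Fin p, ∑ j₁ : Fin m, ∑ j₂ : Fin m,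
        ‖((A ^ t₁ * B)ᴴ * M k * (A ^ t₂ * B)) j₁ j₂‖ ^ 2)
      = (∑ k : Fin p,
          Matrix.trace ((∑ t ∈ Finset.range L, A ^ t * B * Bᴴ * (Aᴴ) ^ t) * M k *
            (∑ t ∈ Finset.range L, A ^ t * B * Bᴴ * (Aᴴ) ^ t) * M k)).re := by
  have hP : ∀ t : ℕ, A ^ t * B * Bᴴ * (Aᴴ) ^ t = (A ^ t * B) * (A ^ t * B)ᴴ := fun t => by
    rw [conjTranspose_mul, conjTranspose_pow, Matrix.mul_assoc]
  calc _ = ∑ k : Fin p, ∑ t₁ ∈ Finset.range L, ∑ t₂ ∈ Finset.range L, ∑ j₁ : Fin m, ∑ j₂ : Fin m,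
        ‖((A ^ t₁ * B)ᴴ * M k * (A ^ t₂ * B)) j₁ j₂‖ ^ 2 :=
        (Finset.sum_congr rfl fun _ _ => Finset.sum_comm).trans Finset.sum_comm
    _ = _ := by
        simp only [hP, Complex.re_sum]
        exact Finset.sum_congr rfl fun k _ =>
          sum_sum_norm_sq_sandwich_eq_re_trace _ (fun t => A ^ t * B) (hM k)
end

section
/- Output error bound for a single LQO system pair: given kernels h₁, ĥ₁ (linear) and h₂, ĥ₂ (quadratic) and a common input u, if y_k = Σ_{t≤k} h₁[t]u_{k−t} + Σ_{t₁,t₂≤k} h₂[t₁,t₂](u_{k−t₁} ⊗ u_{k−t₂}) and ŷ_k is defined analogously with ĥ₁, ĥ₂, then ‖y − ŷ‖²_{ℓ^∞_L} ≤ (‖h₁ − ĥ₁‖²_{ℓ²_L} + ‖h₂ − ĥ₂‖²_{ℓ²_L}) · (1 + ‖u‖²_{ℓ²_L}) · ‖u‖²_{ℓ²_L}. -/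
/-! The error `y − z` is the response of the difference kernels `h₁ − g₁`, `h₂ − g₂` to `u`.
At each step `k < L`, Cauchy–Schwarz over the convolution sums, together with
`‖M v‖ ≤ ‖M‖_F ‖v‖` and `‖a ⊗ b‖ = ‖a‖ ‖b‖`, bounds the linear part by `‖h₁ − g₁‖ ‖u‖` and the
quadratic part by `‖h₂ − g₂‖ ‖u‖²` (all ℓ² norms over `[0, L)`). After squaring, Cauchy–Schwarz
for `(α, β) · (r, r²)`, i.e. `(α r + β r²)² ≤ (α² + β²)(1 + r²) r²`, finishes. -/

/-- Euclidean norm of a finite vector of complex numbers. -/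
noncomputable def normE {p : ℕ} (v : Fin p → ℂ) : ℝ := Real.sqrt (∑ i, ‖v i‖ ^ 2)

/-- Frobenius norm of a complex matrix. -/
noncomputable def normF {p q : Type*} [Fintype p] [Fintype q] (M : Matrix p q ℂ) : ℝ :=
  Real.sqrt (∑ i, ∑ j, ‖M i j‖ ^ 2)

/-- Kronecker product of two vectors. -/
def kron {m : ℕ} (a b : Fin m → ℂ) : Fin m × Fin m → ℂ := fun x => a x.1 * b x.2

open Finset Matrix WithLp

section EuclideanNorm

variable {ι κ : Type*} [Fintype ι] [Fintype κ]

lemma normE_eq_norm_toLp {p : ℕ} (v : Fin p → ℂ) : normE v = ‖toLp 2 v‖ := by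
  rw [EuclideanSpace.norm_eq]; rfl

lemma normF_sq (M : Matrix ι κ ℂ) : normF M ^ 2 = ∑ i, ∑ j, ‖M i j‖ ^ 2 :=
  Real.sq_sqrt (by positivity)

lemma norm_toLp_mulVec_le (M : Matrix ι κ ℂ) (v : κ → ℂ) :
    ‖toLp 2 (M *ᵥ v)‖ ≤ normF M * ‖toLp 2 v‖ := by
  have row_le : ∀ i, ‖(M *ᵥ v) i‖ ^ 2 ≤ (∑ j, ‖M i j‖ ^ 2) * ∑ j, ‖v j‖ ^ 2 := fun i =>
    calc ‖(M *ᵥ v) i‖ ^ 2 ≤ (∑ j, ‖M i j‖ * ‖v j‖) ^ 2 := by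
          gcongr
          exact (norm_sum_le _ _).trans_eq (by simp only [norm_mul])
      _ ≤ (∑ j, ‖M i j‖ ^ 2) * ∑ j, ‖v j‖ ^ 2 := sum_mul_sq_le_sq_mul_sq _ _ _
  refine le_of_sq_le_sq ?_ (mul_nonneg (Real.sqrt_nonneg _) (norm_nonneg _))
  rw [mul_pow, normF_sq, EuclideanSpace.norm_sq_eq, EuclideanSpace.norm_sq_eq, sum_mul]
  exact sum_le_sum fun i _ => row_le i

lemma norm_toLp_kron {m : ℕ} (a b : Fin m → ℂ) :
    ‖toLp 2 (kron a b)‖ = ‖toLp 2 a‖ * ‖toLp 2 b‖ := by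
  refine (sq_eq_sq₀ (norm_nonneg _) (by positivity)).1 ?_
  simp only [mul_pow, EuclideanSpace.norm_sq_eq, Fintype.sum_prod_type, sum_mul_sum]
  simp [kron, mul_pow]

lemma norm_toLp_sum_mulVec_le {α : Type*} (s : Finset α) (A : α → Matrix ι κ ℂ)
    (x : α → κ → ℂ) :
    ‖toLp 2 (∑ i ∈ s, A i *ᵥ x i)‖
      ≤ √(∑ i ∈ s, normF (A i) ^ 2) * √(∑ i ∈ s, ‖toLp 2 (x i)‖ ^ 2) :=
  calc ‖toLp 2 (∑ i ∈ s, A i *ᵥ x i)‖ ≤ ∑ i ∈ s, ‖toLp 2 (A i *ᵥ x i)‖ := by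
        rw [toLp_sum]; exact norm_sum_le _ _
    _ ≤ ∑ i ∈ s, normF (A i) * ‖toLp 2 (x i)‖ :=
        sum_le_sum fun i _ => norm_toLp_mulVec_le _ _
    _ ≤ _ := Real.sum_mul_le_sqrt_mul_sqrt _ _ _

end EuclideanNorm

lemma sum_range_succ_reflect_le {f : ℕ → ℝ} (hf : ∀ t, 0 ≤ f t) {k L : ℕ} (hk : k < L) :
    ∑ t ∈ range (k + 1), f (k - t) ≤ ∑ t ∈ range L, f t := by
  rw [show ∑ t ∈ range (k + 1), f (k - t) = ∑ t ∈ range (k + 1), f t by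
    simpa using sum_range_reflect f (k + 1)]
  exact sum_le_sum_of_subset_of_nonneg (range_subset_range.2 hk) fun t _ _ => hf t

section Convolution

variable {ι κ : Type*} [Fintype ι] [Fintype κ] {k L : ℕ}

lemma norm_toLp_conv_le (A : ℕ → Matrix ι κ ℂ) (x : ℕ → κ → ℂ) (hk : k < L) :
    ‖toLp 2 (∑ t ∈ range (k + 1), A t *ᵥ x (k - t))‖
      ≤ √(∑ t ∈ range L, normF (A t) ^ 2) * √(∑ t ∈ range L, ‖toLp 2 (x t)‖ ^ 2) := by
  refine (norm_toLp_sum_mulVec_le _ _ _).trans ?_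
  refine mul_le_mul (Real.sqrt_le_sqrt ?_) (Real.sqrt_le_sqrt ?_) (Real.sqrt_nonneg _)
    (Real.sqrt_nonneg _)
  · exact sum_le_sum_of_subset_of_nonneg (range_subset_range.2 hk) fun _ _ _ => sq_nonneg _
  · exact sum_range_succ_reflect_le (fun t => sq_nonneg ‖toLp 2 (x t)‖) hk

lemma norm_toLp_conv₂_kron_le {m : ℕ} (B : ℕ → ℕ → Matrix ι (Fin m × Fin m) ℂ)
    (x : ℕ → Fin m → ℂ) (hk : k < L) :
    ‖toLp 2 (∑ t₁ ∈ range (k + 1), ∑ t₂ ∈ range (k + 1),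
        B t₁ t₂ *ᵥ kron (x (k - t₁)) (x (k - t₂)))‖
      ≤ √(∑ t₁ ∈ range L, ∑ t₂ ∈ range L, normF (B t₁ t₂) ^ 2)
        * ∑ t ∈ range L, ‖toLp 2 (x t)‖ ^ 2 := by
  set W := range (k + 1) ×ˢ range (k + 1)
  have kron_energy : ∑ t ∈ W, ‖toLp 2 (kron (x (k - t.1)) (x (k - t.2)))‖ ^ 2
      = (∑ t ∈ range (k + 1), ‖toLp 2 (x (k - t))‖ ^ 2) ^ 2 := by
    simp only [W, norm_toLp_kron, mul_pow, sum_product, sq (∑ t ∈ _, _), sum_mul_sum]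
  have kernel_energy : ∑ t ∈ W, normF (B t.1 t.2) ^ 2
      ≤ ∑ t₁ ∈ range L, ∑ t₂ ∈ range L, normF (B t₁ t₂) ^ 2 := by
    rw [← sum_product']
    exact sum_le_sum_of_subset_of_nonneg
      (product_subset_product (range_subset_range.2 hk) (range_subset_range.2 hk))
      fun _ _ _ => sq_nonneg _
  calc _ = ‖toLp 2 (∑ t ∈ W, B t.1 t.2 *ᵥ kron (x (k - t.1)) (x (k - t.2)))‖ := by
        rw [sum_product]
    _ ≤ √(∑ t ∈ W, normF (B t.1 t.2) ^ 2)
          * √(∑ t ∈ W, ‖toLp 2 (kron (x (k - t.1)) (x (k - t.2)))‖ ^ 2) :=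
        norm_toLp_sum_mulVec_le _ _ _
    _ ≤ _ := by
        rw [kron_energy, Real.sqrt_sq (sum_nonneg fun _ _ => sq_nonneg _)]
        exact mul_le_mul (Real.sqrt_le_sqrt kernel_energy)
          (sum_range_succ_reflect_le (fun t => sq_nonneg ‖toLp 2 (x t)‖) hk)
          (sum_nonneg fun _ _ => sq_nonneg _) (Real.sqrt_nonneg _)

end Convolution

lemma sq_mul_add_mul_sq_le (α β r : ℝ) :
    (α * r + β * r ^ 2) ^ 2 ≤ (α ^ 2 + β ^ 2) * (1 + r ^ 2) * r ^ 2 := by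
  nlinarith [sq_nonneg (α * r ^ 2 - β * r)]

/-- Output error bound for a pair of LQO systems driven by a common input:
`‖y − z‖²_{ℓ∞_L} ≤ (‖h₁ − g₁‖²_{ℓ²_L} + ‖h₂ − g₂‖²_{ℓ²_L}) (1 + ‖u‖²_{ℓ²_L}) ‖u‖²_{ℓ²_L}`. -/
theorem lqo_output_error_bound {m p L : ℕ} (hL : 0 < L)
    (h₁ g₁ : ℕ → Matrix (Fin p) (Fin m) ℂ)
    (h₂ g₂ : ℕ → ℕ → Matrix (Fin p) (Fin m × Fin m) ℂ)
    (u : ℕ → Fin m → ℂ) (y z : ℕ → Fin p → ℂ)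
    (hy : ∀ k, y k = (∑ t ∈ Finset.range (k + 1), (h₁ t).mulVec (u (k - t)))
        + ∑ t₁ ∈ Finset.range (k + 1), ∑ t₂ ∈ Finset.range (k + 1),
            (h₂ t₁ t₂).mulVec (kron (u (k - t₁)) (u (k - t₂))))
    (hz : ∀ k, z k = (∑ t ∈ Finset.range (k + 1), (g₁ t).mulVec (u (k - t)))
        + ∑ t₁ ∈ Finset.range (k + 1), ∑ t₂ ∈ Finset.range (k + 1),
            (g₂ t₁ t₂).mulVec (kron (u (k - t₁)) (u (k - t₂)))) :
    ((Finset.range L).sup' (Finset.nonempty_range_iff.mpr hL.ne')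
        fun k => normE (y k - z k)) ^ 2
      ≤ ((∑ t ∈ Finset.range L, normF (h₁ t - g₁ t) ^ 2)
          + ∑ t₁ ∈ Finset.range L, ∑ t₂ ∈ Finset.range L,
              normF (h₂ t₁ t₂ - g₂ t₁ t₂) ^ 2)
        * (1 + ∑ k ∈ Finset.range L, normE (u k) ^ 2)
        * (∑ k ∈ Finset.range L, normE (u k) ^ 2) := by
  set E₁ := ∑ t ∈ range L, normF (h₁ t - g₁ t) ^ 2
  set E₂ := ∑ t₁ ∈ range L, ∑ t₂ ∈ range L, normF (h₂ t₁ t₂ - g₂ t₁ t₂) ^ 2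
  set U := ∑ k ∈ range L, normE (u k) ^ 2
  have hU : U = ∑ k ∈ range L, ‖toLp 2 (u k)‖ ^ 2 := by simp only [U, normE_eq_norm_toLp]
  have error_eq : ∀ k, y k - z k = ∑ t ∈ range (k + 1), (h₁ t - g₁ t) *ᵥ u (k - t)
      + ∑ t₁ ∈ range (k + 1), ∑ t₂ ∈ range (k + 1),
          (h₂ t₁ t₂ - g₂ t₁ t₂) *ᵥ kron (u (k - t₁)) (u (k - t₂)) := fun k => by
    rw [hy, hz]
    simp only [sub_mulVec, sum_sub_distrib]
    abel
  have error_le : ∀ k ∈ range L, normE (y k - z k) ≤ √E₁ * √U + √E₂ * √U ^ 2 := by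
    intro k hk
    rw [normE_eq_norm_toLp, error_eq, toLp_add, Real.sq_sqrt (by positivity), hU]
    exact (norm_add_le _ _).trans (add_le_add
      (norm_toLp_conv_le _ _ (mem_range.1 hk)) (norm_toLp_conv₂_kron_le _ _ (mem_range.1 hk)))
  have sup_nonneg : 0 ≤ (range L).sup' (nonempty_range_iff.mpr hL.ne')
      fun k => normE (y k - z k) :=
    le_sup'_of_le _ (mem_range.2 hL) (Real.sqrt_nonneg _)
  calc _ ≤ (√E₁ * √U + √E₂ * √U ^ 2) ^ 2 := by gcongr; exact sup'_le _ _ error_le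
    _ ≤ (√E₁ ^ 2 + √E₂ ^ 2) * (1 + √U ^ 2) * √U ^ 2 := sq_mul_add_mul_sq_le _ _ _
    _ = (E₁ + E₂) * (1 + U) * U := by
        rw [Real.sq_sqrt (by positivity), Real.sq_sqrt (by positivity),
          Real.sq_sqrt (by positivity)]
end
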